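/- The two-color graph Ramsey number R(W_5, W_7) is at least 14; that is, there exists a simple graph G on 13 vertices such that the complement of G contains no copy of the wheel W_5 as a subgraph and G contains no copy of the wheel W_7 as a subgraph. -/

import Mathlib

open SimpleGraph

/-- `ContainsCopy G H` means the graph `H` contains a copy of `G` as a
(not necessarily induced) subgraph. -/
def ContainsCopy {α β : Type*} (G : SimpleGraph α) (H : SimpleGraph β) : Prop :=
  ∃ f : α → β, Function.Injective f ∧ ∀ ⦃u v : α⦄, G.Adj u v → H.Adj (f u) (f v)

/-- The join `G + H` of two graphs: take disjoint copies of `G` and `H` and add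
all edges between them. -/
def graphJoin {α β : Type*} (G : SimpleGraph α) (H : SimpleGraph β) :
    SimpleGraph (α ⊕ β) where
  Adj u v :=
    match u, v with
    | .inl a, .inl b => G.Adj a b
    | .inr a, .inr b => H.Adj a b
    | .inl _, .inr _ => True
    | .inr _, .inl _ => True
  symm := by
    refine ⟨fun u v h => ?_⟩
    cases u <;> cases v <;> simp_all <;> exact h.symm
  loopless := by
    refine ⟨fun u => ?_⟩
    cases u <;> simp

/-- The wheel `W n`: the join of a single vertex with a cycle on `n - 1` vertices. -/
def wheelGraph (n : ℕ) : SimpleGraph (Fin 1 ⊕ Fin (n - 1)) :=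
  graphJoin (⊥ : SimpleGraph (Fin 1)) (cycleGraph (n - 1))

/-- The book `B n`: the join of an edge `K₂` with an empty graph on `n` vertices. -/
def bookGraph (n : ℕ) : SimpleGraph (Fin 2 ⊕ Fin n) :=
  graphJoin (⊤ : SimpleGraph (Fin 2)) (⊥ : SimpleGraph (Fin n))

/-- The two-colour graph Ramsey number `R(G₁, G₂)`: the least `n` such that every
simple graph `G` on `n` vertices contains a copy of `G₁`, or its complement
contains a copy of `G₂`. -/
noncomputable def ramseyNumber {α β : Type*} (G₁ : SimpleGraph α) (G₂ : SimpleGraph β) : ℕ :=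
  sInf {n : ℕ | ∀ G : SimpleGraph (Fin n), ContainsCopy G₁ G ∨ ContainsCopy G₂ Gᶜ}



/-! ### The 13-vertex witness graph -/

/-- Adjacency matrix of the witness graph, packed into bits of a natural number:
vertex `i` is adjacent to vertex `j` iff bit `13*i + j` is set. -/
def rwAdjMask : ℕ := 144433751127184000624959651828667991766442264671454

/-- Boolean adjacency of the witness graph. -/
def rwAdjB (i j : Fin 13) : Bool := rwAdjMask.testBit (13 * i.1 + j.1)

/-- Boolean adjacency of the complement of the witness graph. -/
def rwNAdjB (i j : Fin 13) : Bool := (i != j) && !(rwAdjB i j)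

lemma rwAdjB_symm : ∀ i j : Fin 13, rwAdjB i j = true → rwAdjB j i = true := by decide

lemma rwAdjB_irrefl : ∀ i : Fin 13, ¬ rwAdjB i i = true := by decide

/-- The witness graph on 13 vertices. -/
def rwG : SimpleGraph (Fin 13) where
  Adj i j := rwAdjB i j = true
  symm := ⟨fun i j h => rwAdjB_symm i j h⟩
  loopless := ⟨fun i h => rwAdjB_irrefl i h⟩

/-- Searchable form of "contains a `W₇ = K₁ + C₆`" for a boolean adjacency. -/
abbrev rwHasW7 (A : Fin 13 → Fin 13 → Bool) : Prop :=
  ∃ h a, A h a = true ∧ ∃ b, (A h b && A a b) = true ∧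
    ∃ c, (A h c && A b c && (c != a)) = true ∧
    ∃ d, (A h d && A c d && (d != a) && (d != b)) = true ∧
    ∃ e, (A h e && A d e && (e != a) && (e != b) && (e != c)) = true ∧
    ∃ f, (A h f && A e f && A f a && (f != b) && (f != c) && (f != d)) = true

/-- Searchable form of "contains a `W₅ = K₁ + C₄`" for a boolean adjacency. -/
abbrev rwHasW5 (A : Fin 13 → Fin 13 → Bool) : Prop :=
  ∃ h a, A h a = true ∧ ∃ b, (A h b && A a b) = true ∧
    ∃ c, (A h c && A b c && (c != a)) = true ∧
    ∃ d, (A h d && A c d && A d a && (d != b)) = true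

set_option maxRecDepth 100000 in
set_option maxHeartbeats 4000000 in
lemma rwNoW7search : ¬ rwHasW7 rwAdjB := by decide

set_option maxHeartbeats 4000000 in
lemma rwNoW5search : ¬ rwHasW5 rwNAdjB := by decide

lemma cyc6_adj : ∀ i : Fin 6, (cycleGraph 6).Adj i (i + 1) := by decide
lemma cyc4_adj : ∀ i : Fin 4, (cycleGraph 4).Adj i (i + 1) := by decide

lemma extractW7 (H : SimpleGraph (Fin 13)) (A : Fin 13 → Fin 13 → Bool)
    (hA : ∀ x y, H.Adj x y → A x y = true)
    (hcc : ContainsCopy (wheelGraph 7) H) : rwHasW7 A := by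
  obtain ⟨f, finj, hf⟩ := hcc
  set h : Fin 13 := f (Sum.inl 0) with hh
  set c : Fin 6 → Fin 13 := fun i => f (Sum.inr i) with hc
  have hhub : ∀ i : Fin 6, A h (c i) = true := fun i =>
    hA _ _ (hf (show (wheelGraph 7).Adj (Sum.inl 0) (Sum.inr i) from trivial))
  have hcyc : ∀ i : Fin 6, A (c i) (c (i + 1)) = true := fun i =>
    hA _ _ (hf (show (wheelGraph 7).Adj (Sum.inr i) (Sum.inr (i + 1)) from cyc6_adj i))
  have hne : ∀ i j : Fin 6, i ≠ j → (c i != c j) = true := by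
    intro i j hij
    have : c i ≠ c j := fun e => hij (Sum.inr.inj (finj e))
    simpa [bne_iff_ne] using this
  have e50 : c 0 = c (5 + 1) := rfl
  refine ⟨h, c 0, hhub 0, c 1, ?_, c 2, ?_, c 3, ?_, c 4, ?_, c 5, ?_⟩ <;>
    simp only [Bool.and_eq_true]
  · exact ⟨hhub 1, hcyc 0⟩
  · exact ⟨⟨hhub 2, hcyc 1⟩, hne 2 0 (by decide)⟩
  · exact ⟨⟨⟨hhub 3, hcyc 2⟩, hne 3 0 (by decide)⟩, hne 3 1 (by decide)⟩
  · exact ⟨⟨⟨⟨hhub 4, hcyc 3⟩, hne 4 0 (by decide)⟩, hne 4 1 (by decide)⟩, hne 4 2 (by decide)⟩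
  · exact ⟨⟨⟨⟨⟨hhub 5, hcyc 4⟩, e50 ▸ hcyc 5⟩, hne 5 1 (by decide)⟩,
      hne 5 2 (by decide)⟩, hne 5 3 (by decide)⟩

lemma extractW5 (H : SimpleGraph (Fin 13)) (A : Fin 13 → Fin 13 → Bool)
    (hA : ∀ x y, H.Adj x y → A x y = true)
    (hcc : ContainsCopy (wheelGraph 5) H) : rwHasW5 A := by
  obtain ⟨f, finj, hf⟩ := hcc
  set h : Fin 13 := f (Sum.inl 0) with hh
  set c : Fin 4 → Fin 13 := fun i => f (Sum.inr i) with hc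
  have hhub : ∀ i : Fin 4, A h (c i) = true := fun i =>
    hA _ _ (hf (show (wheelGraph 5).Adj (Sum.inl 0) (Sum.inr i) from trivial))
  have hcyc : ∀ i : Fin 4, A (c i) (c (i + 1)) = true := fun i =>
    hA _ _ (hf (show (wheelGraph 5).Adj (Sum.inr i) (Sum.inr (i + 1)) from cyc4_adj i))
  have hne : ∀ i j : Fin 4, i ≠ j → (c i != c j) = true := by
    intro i j hij
    have : c i ≠ c j := fun e => hij (Sum.inr.inj (finj e))
    simpa [bne_iff_ne] using this
  have e30 : c 0 = c (3 + 1) := rfl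
  refine ⟨h, c 0, hhub 0, c 1, ?_, c 2, ?_, c 3, ?_⟩ <;>
    simp only [Bool.and_eq_true]
  · exact ⟨hhub 1, hcyc 0⟩
  · exact ⟨⟨hhub 2, hcyc 1⟩, hne 2 0 (by decide)⟩
  · exact ⟨⟨⟨hhub 3, hcyc 2⟩, e30 ▸ hcyc 3⟩, hne 3 1 (by decide)⟩

lemma rwNoW7 : ¬ ContainsCopy (wheelGraph 7) rwG :=
  fun hcc => rwNoW7search (extractW7 rwG rwAdjB (fun _ _ h => h) hcc)

lemma rwNoW5c : ¬ ContainsCopy (wheelGraph 5) rwGᶜ := by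
  intro hcc
  refine rwNoW5search (extractW5 rwGᶜ rwNAdjB ?_ hcc)
  intro x y hxy
  rw [SimpleGraph.compl_adj] at hxy
  have h1 : (x != y) = true := by simpa [bne_iff_ne] using hxy.1
  have h2 : rwAdjB x y = false := by
    cases hb : rwAdjB x y
    · rfl
    · exact absurd hb hxy.2
  simp [rwNAdjB, h1, h2]


/-- Extending a pairwise property on a finite set by one element related to all. -/
lemma pairwise_insert_of {V : Type} [DecidableEq V] (P : V → V → Prop)
    (hsym : ∀ a b, P a b → P b a) (x : V) (B : Finset V)
    (hx : ∀ y ∈ B, P x y) (hB : ∀ u ∈ B, ∀ v ∈ B, u ≠ v → P u v) :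
    ∀ u ∈ insert x B, ∀ v ∈ insert x B, u ≠ v → P u v := by
  intro u hu v hv huv
  rcases Finset.mem_insert.mp hu with h1 | h1 <;> rcases Finset.mem_insert.mp hv with h2 | h2
  · exact absurd (h1.trans h2.symm) huv
  · exact h1 ▸ hx v h2
  · exact hsym _ _ (h2 ▸ hx u h1)
  · exact hB u h1 v h2 huv

/-- A weak finite Ramsey theorem: a set of `2 ^ m` vertices with `s + t ≤ m`
contains an `s`-clique or a `t`-independent set. -/
lemma ramsey_clique_indep {V : Type} [DecidableEq V] (G : SimpleGraph V) :
    ∀ (m s t : ℕ), s + t ≤ m → ∀ A : Finset V, 2 ^ m ≤ A.card →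
      (∃ B ⊆ A, s ≤ B.card ∧ ∀ x ∈ B, ∀ y ∈ B, x ≠ y → G.Adj x y) ∨
      (∃ B ⊆ A, t ≤ B.card ∧ ∀ x ∈ B, ∀ y ∈ B, x ≠ y → ¬ G.Adj x y) := by
  classical
  intro m
  induction m with
  | zero =>
    intro s t hst A _
    have hs : s = 0 := by omega
    exact Or.inl ⟨∅, Finset.empty_subset _, by simp [hs], by simp⟩
  | succ m ih =>
    intro s t hst A hA
    rcases Nat.eq_zero_or_pos s with hs | hs
    · exact Or.inl ⟨∅, Finset.empty_subset _, by simp [hs], by simp⟩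
    rcases Nat.eq_zero_or_pos t with ht | ht
    · exact Or.inr ⟨∅, Finset.empty_subset _, by simp [ht], by simp⟩
    have hApos : 0 < A.card := by
      have : 0 < 2 ^ (m + 1) := Nat.pow_pos (by norm_num)
      omega
    obtain ⟨x, hxA⟩ := Finset.card_pos.mp hApos
    set N : Finset V := (A.erase x).filter (fun y => G.Adj x y) with hN
    set M : Finset V := (A.erase x).filter (fun y => ¬ G.Adj x y) with hM
    have hNM : N.card + M.card = (A.erase x).card :=
      Finset.card_filter_add_card_filter_not (fun y => G.Adj x y)
    have hErase : (A.erase x).card = A.card - 1 := Finset.card_erase_of_mem hxA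
    have hpow : 2 ^ (m + 1) = 2 ^ m + 2 ^ m := by ring
    have hpowpos : 0 < 2 ^ m := Nat.pow_pos (by norm_num)
    have hbig : 2 ^ m ≤ N.card ∨ 2 ^ m ≤ M.card := by omega
    have hNA : N ⊆ A := (Finset.filter_subset _ _).trans (Finset.erase_subset _ _)
    have hMA : M ⊆ A := (Finset.filter_subset _ _).trans (Finset.erase_subset _ _)
    rcases hbig with hNbig | hMbig
    · rcases ih (s - 1) t (by omega) N hNbig with ⟨B, hBN, hBc, hBcl⟩ | ⟨B, hBN, hBc, hBi⟩
      · left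
        have hxB : x ∉ B := fun hxB => Finset.notMem_erase x A
          (Finset.mem_of_mem_filter x (hBN hxB))
        refine ⟨insert x B, Finset.insert_subset hxA (hBN.trans hNA), ?_, ?_⟩
        · rw [Finset.card_insert_of_notMem hxB]; omega
        · exact pairwise_insert_of G.Adj (fun a b h => h.symm) x B
            (fun y hy => (Finset.mem_filter.mp (hBN hy)).2) hBcl
      · exact Or.inr ⟨B, hBN.trans hNA, hBc, hBi⟩
    · rcases ih s (t - 1) (by omega) M hMbig with ⟨B, hBM, hBc, hBcl⟩ | ⟨B, hBM, hBc, hBi⟩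
      · exact Or.inl ⟨B, hBM.trans hMA, hBc, hBcl⟩
      · right
        have hxB : x ∉ B := fun hxB => Finset.notMem_erase x A
          (Finset.mem_of_mem_filter x (hBM hxB))
        refine ⟨insert x B, Finset.insert_subset hxA (hBM.trans hMA), ?_, ?_⟩
        · rw [Finset.card_insert_of_notMem hxB]; omega
        · exact pairwise_insert_of (fun a b => ¬ G.Adj a b) (fun a b h hba => h hba.symm) x B
            (fun y hy => (Finset.mem_filter.mp (hBM hy)).2) hBi


/-- Any graph on `α` embeds into a clique of size at least `card α`. -/
lemma containsCopy_of_clique {α : Type*} [Fintype α] (K : SimpleGraph α) {V : Type*}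
    (H : SimpleGraph V) (B : Finset V) (hcard : Fintype.card α ≤ B.card)
    (hcl : ∀ x ∈ B, ∀ y ∈ B, x ≠ y → H.Adj x y) : ContainsCopy K H := by
  have hcard' : Fintype.card α ≤ Fintype.card B := by
    rwa [Fintype.card_coe]
  obtain ⟨e⟩ : Nonempty (α ↪ B) := Function.Embedding.nonempty_of_card_le hcard'
  refine ⟨fun a => (e a : V), fun a b h => e.injective (Subtype.ext h), ?_⟩
  intro u v huv
  exact hcl _ (e u).2 _ (e v).2 (fun hh => huv.ne (e.injective (Subtype.ext hh)))

/-- **R(W₅, W₇) ≥ 14**: the two-colour Ramsey number of the wheels `W₅` and `W₇`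
is at least 14; that is, there is a graph `G` on 13 vertices whose complement
contains no copy of `W₅` and which contains no copy of `W₇`. -/
theorem ramsey_W5_W7_ge_14 :
    14 ≤ ramseyNumber (wheelGraph 5) (wheelGraph 7) ∧
    ∃ G : SimpleGraph (Fin 13),
      ¬ ContainsCopy (wheelGraph 5) Gᶜ ∧ ¬ ContainsCopy (wheelGraph 7) G := by
  classical
  set S : Set ℕ :=
    {n : ℕ | ∀ G : SimpleGraph (Fin n),
      ContainsCopy (wheelGraph 5) G ∨ ContainsCopy (wheelGraph 7) Gᶜ} with hS
  have hmemN : (16384 : ℕ) ∈ S := by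
    intro G
    rcases ramsey_clique_indep G 14 7 7 (by norm_num) Finset.univ
        (by rw [Finset.card_univ, Fintype.card_fin]; norm_num) with
      ⟨B, _, hBc, hBcl⟩ | ⟨B, _, hBc, hBi⟩
    · left
      have h5 : Fintype.card (Fin 1 ⊕ Fin (5 - 1)) = 5 := by simp
      exact containsCopy_of_clique _ G B (by rw [h5]; omega) hBcl
    · right
      have h7 : Fintype.card (Fin 1 ⊕ Fin (7 - 1)) = 7 := by simp
      refine containsCopy_of_clique _ Gᶜ B (by rw [h7]; omega) ?_
      intro x hx y hy hxy
      exact (G.compl_adj x y).mpr ⟨hxy, hBi x hx y hy hxy⟩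
  have hlow : ∀ n ∈ S, 14 ≤ n := by
    intro n hn
    by_contra hlt
    have hle : n ≤ 13 := by omega
    set ι : Fin n → Fin 13 := Fin.castLE hle with hι
    have ιinj : Function.Injective ι := Fin.castLE_injective hle
    rcases hn ((rwGᶜ).comap ι) with ⟨f, finj, hf⟩ | ⟨f, finj, hf⟩
    · exact rwNoW5c ⟨ι ∘ f, ιinj.comp finj, fun u v h => hf h⟩
    · refine rwNoW7 ⟨ι ∘ f, ιinj.comp finj, fun u v h => ?_⟩
      have h2 := hf h
      rw [SimpleGraph.compl_adj] at h2
      have hne : ι (f u) ≠ ι (f v) := fun e => h2.1 (ιinj e)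
      have h3 := h2.2
      simp only [SimpleGraph.comap_adj, SimpleGraph.compl_adj, not_and, not_not] at h3
      exact h3 hne
  refine ⟨?_, ⟨rwG, rwNoW5c, rwNoW7⟩⟩
  have hs : sInf S ∈ S := Nat.sInf_mem ⟨16384, hmemN⟩
  exact hlow _ hs
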